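/- arXiv:1708.06014 — 2 statements merged into one kernel-verified Lean document; each statement's English description precedes it below -/
import Mathlib

section
/- Let p be an odd prime, ζ a primitive p-th root of unity, and φ(z) = (z − 1)^p + 2 − ζ ∈ ℤ[ζ][z]. Then for every n ≥ 1, N_{ℚ(ζ)/ℚ}(φ^n(1)) ≡ 2^p − 1 (mod p²), where φ^n denotes the n-th iterate of φ. -/
/-!
Put `λ = 1 - ζ`. Since `φ z - 1 = (z - 1) ^ p + λ`, every iterate satisfies `λ ∣ φⁿ(1) - 1`, so
`φⁿ⁺¹(1) - (2 - ζ) = (φⁿ(1) - 1) ^ p` is divisible by `λ ^ p`, hence by `pλ` because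
`p ∣ λ ^ (p - 1)`. The principal ideal `(pλ)` is Galois stable, so writing the norm as the product
of the Galois conjugates shows that `d = N(φⁿ⁺¹(1)) - N(2 - ζ)` is divisible by `pλ` in `𝓞 K`.
Taking norms once more gives `p ^ (r + 1) ∣ d ^ r` with `r = [K : ℚ]`, which forces `p² ∣ d`.
Finally `N(2 - ζ) = Φ_p(2) = 2 ^ p - 1`.
-/

open NumberField Polynomial

theorem PowerBasis.norm_algebraMap_sub_gen {R S : Type*} [CommRing R] [CommRing S] [Algebra R S]
    (pb : PowerBasis R S) (a : R) :
    Algebra.norm R (algebraMap R S a - pb.gen) = (minpoly R pb.gen).eval a := by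
  classical
  rw [Algebra.norm_eq_matrix_det pb.basis, map_sub, AlgHom.commutes, ← charpoly_leftMulMatrix,
    Matrix.eval_charpoly]
  rfl

section intNorm

attribute [local instance] FractionRing.liftAlgebra

theorem Algebra.dvd_algebraMap_intNorm_sub_intNorm {A B : Type*} [CommRing A] [CommRing B]
    [Algebra A B] [IsDomain A] [IsIntegrallyClosed A] [IsDomain B] [IsIntegrallyClosed B]
    [Module.Finite A B] [Module.IsTorsionFree A B] [IsGalois (FractionRing A) (FractionRing B)]
    {a x y : B} (ha : ∀ σ : B ≃ₐ[A] B, a ∣ σ a) (hxy : a ∣ x - y) :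
    a ∣ algebraMap A B (intNorm A B x - intNorm A B y) := by
  rw [map_sub, algebraMap_intNorm_of_isGalois, algebraMap_intNorm_of_isGalois,
    ← Ideal.mem_span_singleton, ← Ideal.Quotient.eq, map_prod, map_prod]
  refine Finset.prod_congr rfl fun σ _ ↦ Ideal.Quotient.eq.mpr ?_
  rw [Ideal.mem_span_singleton, ← map_sub]
  exact (ha σ).trans (map_dvd σ hxy)

theorem NumberField.isGalois_fractionRing_int_ringOfIntegers (K : Type*) [Field K] [NumberField K]
    [IsGalois ℚ K] : IsGalois (FractionRing ℤ) (FractionRing (𝓞 K)) :=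
  IsGalois.of_equiv_equiv (f := (FractionRing.algEquiv ℤ ℚ).toRingEquiv.symm)
    (g := (FractionRing.algEquiv (𝓞 K) K).toRingEquiv.symm) <|
      RingHom.ext fun _ ↦ IsFractionRing.algEquiv_commutes (FractionRing.algEquiv ℤ ℚ).symm
        (FractionRing.algEquiv (𝓞 K) K).symm _

end intNorm

theorem Int.sq_dvd_of_pow_succ_dvd_pow {p d : ℤ} (hp : Prime p) {k : ℕ}
    (h : p ^ (k + 1) ∣ d ^ k) : p ^ 2 ∣ d := by
  obtain ⟨e, rfl⟩ : p ∣ d := hp.dvd_of_dvd_pow ((dvd_pow_self p k.succ_ne_zero).trans h)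
  rw [mul_pow, pow_succ] at h
  have hpe : p ∣ e := hp.dvd_of_dvd_pow ((mul_dvd_mul_iff_left (pow_ne_zero k hp.ne_zero)).mp h)
  rw [sq]
  exact mul_dvd_mul_left p hpe

theorem IsPrimitiveRoot.one_sub_dvd_map_one_sub {R A : Type*} [CommRing R] [CommRing A]
    [IsDomain A] [Algebra R A] {n : ℕ} [NeZero n] {ζ : A} (hζ : IsPrimitiveRoot ζ n)
    (σ : A ≃ₐ[R] A) : 1 - ζ ∣ σ (1 - ζ) := by
  rw [← neg_sub, map_neg, neg_dvd, dvd_neg]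
  exact (hζ.associated_sub_one_map_sub_one σ).dvd

theorem IsPrimitiveRoot.norm_intCast_sub {n : ℕ} [NeZero n] {K : Type*} [Field K] [CharZero K]
    [IsCyclotomicExtension {n} ℚ K] {ζ : 𝓞 K} (hζ : IsPrimitiveRoot ζ n) (a : ℤ) :
    Algebra.norm ℤ ((a : 𝓞 K) - ζ) = (cyclotomic n ℤ).eval a := by
  have hζK : IsPrimitiveRoot (ζ : K) n := hζ.map_of_injective RingOfIntegers.coe_injective
  have hgen : hζK.integralPowerBasis.gen = ζ := by simp
  rw [← eq_intCast (algebraMap ℤ (𝓞 K)), ← hgen, PowerBasis.norm_algebraMap_sub_gen, hgen,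
    cyclotomic_eq_minpoly hζK (NeZero.pos n), ← minpoly.algebraMap_eq RingOfIntegers.coe_injective]

namespace IsPrimitiveRoot

variable {p : ℕ} [hp : Fact p.Prime] {K : Type*} [Field K] {ζ : 𝓞 K}

theorem natCast_dvd_one_sub_pow (hζ : IsPrimitiveRoot ζ p) : (p : 𝓞 K) ∣ (1 - ζ) ^ (p - 1) := by
  have hζK : IsPrimitiveRoot (ζ : K) p := hζ.map_of_injective RingOfIntegers.coe_injective
  have hdvd := (IsCyclotomicExtension.Rat.associated_zeta_sub_one_pow_prime p hζK).symm.dvd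
  rw [← neg_sub, neg_pow] at hdvd
  exact (IsUnit.dvd_mul_left (isUnit_one.neg.pow _)).mp hdvd

variable [CharZero K] [IsCyclotomicExtension {p} ℚ K]

theorem norm_one_sub (hζ : IsPrimitiveRoot ζ p) : Algebra.norm ℤ (1 - ζ) = p := by
  simpa using hζ.norm_intCast_sub 1

theorem norm_two_sub (hζ : IsPrimitiveRoot ζ p) : Algebra.norm ℤ (2 - ζ) = 2 ^ p - 1 := by
  have h := hζ.norm_intCast_sub 2
  simp only [cyclotomic_prime, eval_finsetSum, eval_pow, eval_X, Int.cast_ofNat] at h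
  rw [h]
  linear_combination geom_sum_mul (2 : ℤ) p

theorem sq_dvd_norm_sub_norm (hζ : IsPrimitiveRoot ζ p) {x y : 𝓞 K}
    (hxy : (p : 𝓞 K) * (1 - ζ) ∣ x - y) :
    (p : ℤ) ^ 2 ∣ Algebra.norm ℤ x - Algebra.norm ℤ y := by
  have : NumberField K := IsCyclotomicExtension.numberField {p} ℚ K
  have : IsGalois ℚ K := IsCyclotomicExtension.isGalois {p} ℚ K
  have := NumberField.isGalois_fractionRing_int_ringOfIntegers K
  have hσ (σ : 𝓞 K ≃ₐ[ℤ] 𝓞 K) : (p : 𝓞 K) * (1 - ζ) ∣ σ ((p : 𝓞 K) * (1 - ζ)) := by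
    rw [map_mul, map_natCast]
    exact mul_dvd_mul_left _ (hζ.one_sub_dvd_map_one_sub σ)
  have hd := Algebra.dvd_algebraMap_intNorm_sub_intNorm hσ hxy
  rw [Algebra.intNorm_eq_norm] at hd
  replace hd := map_dvd (Algebra.norm ℤ) hd
  rw [Algebra.norm_algebraMap, map_mul, hζ.norm_one_sub, ← map_natCast (algebraMap ℤ (𝓞 K)),
    Algebra.norm_algebraMap, ← pow_succ] at hd
  exact Int.sq_dvd_of_pow_succ_dvd_pow (Nat.prime_iff_prime_int.mp hp.out) hd

end IsPrimitiveRoot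

theorem one_sub_pow_dvd_iterate_succ_sub {R : Type*} [CommRing R] {p : ℕ} (hp : p ≠ 0) {ζ : R}
    {φ : R → R} (hφ : ∀ z, φ z = (z - 1) ^ p + 2 - ζ) (n : ℕ) :
    (1 - ζ) ^ p ∣ φ^[n + 1] 1 - (2 - ζ) := by
  have hdvd (n : ℕ) : 1 - ζ ∣ φ^[n] 1 - 1 := by
    induction n with
    | zero => simp
    | succ n ih =>
      rw [Function.iterate_succ_apply', hφ, show ∀ w : R, w + 2 - ζ - 1 = w + (1 - ζ) by grind]
      exact dvd_add (dvd_pow ih hp) dvd_rfl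
  rw [Function.iterate_succ_apply', hφ, add_sub_assoc, add_sub_cancel_right]
  exact pow_dvd_pow_of_dvd (hdvd n) p

theorem norm_iterate_congr_general (p : ℕ+) (hp : Fact (p : ℕ).Prime)
    (K : Type*) [Field K] [Algebra ℚ K] [IsCyclotomicExtension {(p : ℕ)} ℚ K]
    (ζ : 𝓞 K) (hζ : IsPrimitiveRoot ζ (p : ℕ))
    (φ : 𝓞 K → 𝓞 K) (hφ : ∀ z, φ z = (z - 1) ^ (p : ℕ) + 2 - ζ) :
    ∀ n : ℕ, 1 ≤ n →
      (Algebra.norm ℤ (φ^[n] 1)) ≡ 2 ^ (p : ℕ) - 1 [ZMOD ((p : ℤ) ^ 2)] := by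
  intro n hn
  obtain ⟨m, rfl⟩ := Nat.exists_eq_add_of_le' hn
  have : CharZero K := charZero_of_injective_algebraMap (algebraMap ℚ K).injective
  -- the cyclotomic API is stated for the canonical `ℚ`-algebra structure
  obtain rfl : ‹Algebra ℚ K› = DivisionRing.toRatAlgebra := Subsingleton.elim _ _
  have hdvd : (p : 𝓞 K) * (1 - ζ) ∣ φ^[m + 1] 1 - (2 - ζ) :=
    calc (p : 𝓞 K) * (1 - ζ) ∣ (1 - ζ) ^ (p - 1 : ℕ) * (1 - ζ) :=
          mul_dvd_mul_right hζ.natCast_dvd_one_sub_pow _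
      _ = (1 - ζ) ^ (p : ℕ) := by rw [← pow_succ, Nat.sub_add_cancel p.pos]
      _ ∣ φ^[m + 1] 1 - (2 - ζ) := one_sub_pow_dvd_iterate_succ_sub p.ne_zero hφ m
  have hsq := hζ.sq_dvd_norm_sub_norm hdvd
  rw [hζ.norm_two_sub] at hsq
  exact (Int.modEq_iff_dvd.mpr hsq).symm

theorem norm_iterate_congr (p : ℕ+) (hp : Fact (p : ℕ).Prime) (hodd : Odd (p : ℕ))
    (K : Type*) [Field K] [Algebra ℚ K] [IsCyclotomicExtension {(p : ℕ)} ℚ K]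
    (ζ : 𝓞 K) (hζ : IsPrimitiveRoot ζ (p : ℕ))
    (φ : 𝓞 K → 𝓞 K) (hφ : ∀ z, φ z = (z - 1) ^ (p : ℕ) + 2 - ζ) :
    ∀ n : ℕ, 1 ≤ n →
      (Algebra.norm ℤ (φ^[n] 1)) ≡ 2 ^ (p : ℕ) - 1 [ZMOD ((p : ℤ) ^ 2)] :=
  norm_iterate_congr_general p hp K ζ hζ φ hφ
end

section
/- Let p be an odd prime that is not a Wieferich prime, ζ a primitive p-th root of unity, and φ(z) = (z − 1)^p + 2 − ζ. Then for every m ≥ 1, φ^m(1) is not a unit in ℤ[ζ]. -/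
/-!
Write `λ = ζ - 1`. Every iterate `x = φ^[m] 1` with `m ≥ 1` satisfies `x ≡ 2 - ζ (mod λ^p)`,
because `x - 1` stays divisible by `φ 1 - 1 = -λ`. The Galois conjugates of `λ` are associates of
`λ`, so taking the product over the Galois group gives `N x ≡ N (2 - ζ) = Φ_p(2) = 2^p - 1` modulo
`λ^p`. A rational integer `d` divisible by `λ^p` is divisible by `p^2`: taking norms,
`p^p ∣ d^(p-1)`. If `x` were a unit, `N x = ±1`, and `p^2 ∣ ±1 - (2^p - 1)` means either
`2^(p-1) ≡ 1 (mod p^2)` or `p ∣ 2`.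
-/

open NumberField Polynomial

section Iterate

variable {R : Type*} [CommRing R] {n : ℕ} {c : R} {φ : R → R}

theorem sub_one_dvd_iterate_sub_one (hφ : ∀ z, φ z = (z - 1) ^ n + c) (hn : n ≠ 0) (k : ℕ) :
    c - 1 ∣ φ^[k] 1 - 1 := by
  induction k with
  | zero => simp
  | succ k ih =>
    rw [Function.iterate_succ_apply', hφ, add_sub_assoc]
    exact dvd_add (dvd_pow ih hn) dvd_rfl

theorem sub_one_pow_dvd_iterate_succ_sub (hφ : ∀ z, φ z = (z - 1) ^ n + c) (hn : n ≠ 0)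
    (k : ℕ) : (c - 1) ^ n ∣ φ^[k + 1] 1 - c := by
  rw [Function.iterate_succ_apply', hφ, add_sub_cancel_right]
  exact pow_dvd_pow_of_dvd (sub_one_dvd_iterate_sub_one hφ hn k) n

end Iterate

theorem Prime.sq_dvd_of_pow_succ_dvd_pow {M : Type*} [CommMonoidWithZero M] [IsCancelMulZero M]
    {q d : M} (hq : Prime q) {b : ℕ} (h : q ^ (b + 1) ∣ d ^ b) : q ^ 2 ∣ d := by
  obtain ⟨e, rfl⟩ : q ∣ d := hq.dvd_of_dvd_pow ((dvd_pow_self q b.succ_ne_zero).trans h)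
  rw [pow_succ, mul_pow, mul_dvd_mul_iff_left (pow_ne_zero b hq.ne_zero)] at h
  rw [sq]
  exact mul_dvd_mul_left q (hq.dvd_of_dvd_pow h)

theorem Polynomial.eval_two_cyclotomic_prime (R : Type*) [CommRing R] (p : ℕ) [Fact p.Prime] :
    (cyclotomic p R).eval 2 = 2 ^ p - 1 := by
  have := congr_arg (eval 2) (cyclotomic_prime_mul_X_sub_one R p)
  simpa [show (2 : R) - 1 = 1 by norm_num] using this

theorem IsPrimitiveRoot.norm_algebraMap_sub_eq_eval_cyclotomic {K L : Type*} [Field K] [Field L]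
    [Algebra K L] {n : ℕ} [NeZero n] [IsCyclotomicExtension {n} K L] {ζ : L}
    (hζ : IsPrimitiveRoot ζ n) (hirr : Irreducible (cyclotomic n K)) (a : K) :
    Algebra.norm K (algebraMap K L a - ζ) = (cyclotomic n K).eval a := by
  have := IsCyclotomicExtension.neZero' n K L
  rw [hζ.minpoly_eq_cyclotomic_of_irreducible hirr, ← hζ.powerBasis_gen K,
    ← charpoly_leftMulMatrix, Matrix.eval_charpoly,
    Algebra.norm_eq_matrix_det (hζ.powerBasis K).basis, map_sub, AlgHom.commutes]
  rfl

theorem not_sq_dvd_isUnit_sub_two_pow_sub_one {p : ℕ} (hp : p.Prime) (hodd : Odd p)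
    (hw : (2 : ZMod (p ^ 2)) ^ (p - 1) ≠ 1) {u : ℤ} (hu : IsUnit u) :
    ¬ (p : ℤ) ^ 2 ∣ u - (2 ^ p - 1) := by
  rcases Int.isUnit_iff.1 hu with rfl | rfl <;> intro h
  · have hcop : IsCoprime ((p : ℤ) ^ 2) 2 :=
      (Nat.isCoprime_iff_coprime.2 (Nat.coprime_two_left.2 hodd)).symm.pow_left
    rw [show (1 : ℤ) - (2 ^ p - 1) = 2 * (1 - 2 ^ (p - 1)) by
      rw [← mul_pow_sub_one hp.ne_zero]; ring] at h
    have h' := (ZMod.intCast_zmod_eq_zero_iff_dvd _ (p ^ 2)).2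
      (by exact_mod_cast hcop.dvd_of_dvd_mul_left h)
    push_cast at h'
    exact hw (sub_eq_zero.1 h').symm
  · rw [show (-1 : ℤ) - (2 ^ p - 1) = -2 ^ p by ring, dvd_neg] at h
    have h2 : (p : ℤ) ∣ 2 :=
      (Nat.prime_iff_prime_int.1 hp).dvd_of_dvd_pow ((dvd_pow_self _ two_ne_zero).trans h)
    exact hodd.ne_two_of_dvd_nat dvd_rfl
      ((Nat.prime_dvd_prime_iff_eq hp Nat.prime_two).1 (by exact_mod_cast h2))

namespace NumberField.RingOfIntegers

variable {K : Type*} [Field K] [NumberField K]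

theorem algebraMap_norm_eq_prod_algEquiv [IsGalois ℚ K] (x : 𝓞 K) :
    algebraMap ℤ (𝓞 K) (Algebra.norm ℤ x) = ∏ σ : 𝓞 K ≃ₐ[ℤ] 𝓞 K, σ x := by
  rw [← (galRestrict ℤ ℚ K (𝓞 K)).toEquiv.prod_comp]
  simp only [MulEquiv.toEquiv_eq_coe, EquivLike.coe_coe]
  rw [prod_galRestrict_eq_norm]
  congr
  apply (algebraMap ℤ ℚ).injective_int
  rw [IsIntegralClosure.algebraMap_mk']
  exact Algebra.coe_norm_int x

theorem dvd_algebraMap_norm_sub_norm [IsGalois ℚ K] {a x y : 𝓞 K}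
    (ha : ∀ σ : 𝓞 K ≃ₐ[ℤ] 𝓞 K, a ∣ σ a) (hxy : a ∣ x - y) :
    a ∣ algebraMap ℤ (𝓞 K) (Algebra.norm ℤ x - Algebra.norm ℤ y) := by
  have hσ (σ : 𝓞 K ≃ₐ[ℤ] 𝓞 K) : σ x ≡ σ y [SMOD Ideal.span {a}] := by
    rw [SModEq.sub_mem, Ideal.mem_span_singleton, ← map_sub]
    exact (ha σ).trans (map_dvd σ hxy)
  rw [map_sub, algebraMap_norm_eq_prod_algEquiv, algebraMap_norm_eq_prod_algEquiv,
    ← Ideal.mem_span_singleton, ← SModEq.sub_mem]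
  exact SModEq.prod fun σ _ ↦ hσ σ

variable {p : ℕ} [Fact p.Prime] [IsCyclotomicExtension {p} ℚ K]

variable (K p) in
theorem finrank_eq_prime_sub_one : Module.finrank ℤ (𝓞 K) = p - 1 := by
  rw [rank, IsCyclotomicExtension.finrank K (cyclotomic.irreducible_rat (Fact.out : p.Prime).pos),
    Nat.totient_prime Fact.out]

variable {ζ : 𝓞 K}

theorem _root_.IsPrimitiveRoot.norm_int_sub_one (hζ : IsPrimitiveRoot ζ p) (hp : p ≠ 2) :
    Algebra.norm ℤ (ζ - 1) = p :=
  (hζ.map_of_injective coe_injective).norm_toInteger_sub_one_of_prime_ne_two' hp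

theorem _root_.IsPrimitiveRoot.norm_int_two_sub (hζ : IsPrimitiveRoot ζ p) :
    Algebra.norm ℤ (2 - ζ) = 2 ^ p - 1 := by
  have hζK : IsPrimitiveRoot (ζ : K) p := hζ.map_of_injective coe_injective
  have hcoe : ((2 - ζ : 𝓞 K) : K) = algebraMap ℚ K 2 - ζ := by simp [map_ofNat]
  apply Int.cast_injective (α := ℚ)
  rw [Algebra.coe_norm_int, hcoe, hζK.norm_algebraMap_sub_eq_eval_cyclotomic
    (cyclotomic.irreducible_rat (Fact.out : p.Prime).pos), eval_two_cyclotomic_prime]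
  norm_num

theorem _root_.IsPrimitiveRoot.sq_dvd_of_sub_one_pow_dvd (hζ : IsPrimitiveRoot ζ p) (hp : p ≠ 2)
    {d : ℤ} (h : (ζ - 1) ^ p ∣ algebraMap ℤ (𝓞 K) d) : (p : ℤ) ^ 2 ∣ d := by
  have hnorm := map_dvd (Algebra.norm ℤ) h
  rw [map_pow, hζ.norm_int_sub_one hp, Algebra.norm_algebraMap, finrank_eq_prime_sub_one K p]
    at hnorm
  refine (Nat.prime_iff_prime_int.1 Fact.out).sq_dvd_of_pow_succ_dvd_pow (b := p - 1) ?_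
  rwa [Nat.sub_add_cancel (Fact.out : p.Prime).one_le]

end NumberField.RingOfIntegers

theorem iterate_not_unit (p : ℕ+) (hp : Fact (p : ℕ).Prime) (hodd : Odd (p : ℕ))
    (hw : (2 : ZMod ((p : ℕ) ^ 2)) ^ ((p : ℕ) - 1) ≠ 1)
    (K : Type*) [Field K] [Algebra ℚ K] [IsCyclotomicExtension {(p : ℕ)} ℚ K]
    (ζ : 𝓞 K) (hζ : IsPrimitiveRoot ζ (p : ℕ))
    (φ : 𝓞 K → 𝓞 K) (hφ : ∀ z, φ z = (z - 1) ^ (p : ℕ) + 2 - ζ) :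
    ∀ m : ℕ, 1 ≤ m → ¬ IsUnit (φ^[m] 1) := by
  intro m hm hunit
  have : CharZero K := charZero_of_injective_algebraMap (algebraMap ℚ K).injective
  -- `Algebra ℚ K` is a subsingleton; switching to the canonical instance makes `K` a `NumberField`.
  obtain rfl : ‹Algebra ℚ K› = DivisionRing.toRatAlgebra := Subsingleton.elim _ _
  have : NumberField K := IsCyclotomicExtension.numberField {(p : ℕ)} ℚ K
  have : IsGalois ℚ K := IsCyclotomicExtension.isGalois {(p : ℕ)} ℚ K
  obtain ⟨k, rfl⟩ := Nat.exists_eq_add_of_le' hm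
  have hφ' (z : 𝓞 K) : φ z = (z - 1) ^ (p : ℕ) + (2 - ζ) := by rw [hφ, add_sub_assoc]
  have hcong : (ζ - 1) ^ (p : ℕ) ∣ φ^[k + 1] 1 - (2 - ζ) :=
    (pow_dvd_pow_of_dvd ⟨-1, by ring⟩ _).trans
      (sub_one_pow_dvd_iterate_succ_sub hφ' hp.out.ne_zero k)
  have hnorm := RingOfIntegers.dvd_algebraMap_norm_sub_norm
    (fun σ ↦ by rw [map_pow]; exact pow_dvd_pow_of_dvd (hζ.associated_sub_one_map_sub_one σ).dvd _)
    hcong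
  rw [hζ.norm_int_two_sub] at hnorm
  exact not_sq_dvd_isUnit_sub_two_pow_sub_one hp.out hodd hw (hunit.map _)
    (hζ.sq_dvd_of_sub_one_pow_dvd (hodd.ne_two_of_dvd_nat dvd_rfl) hnorm)
end
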